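/- Let ξ(B, t) denote the exact channel gain formula ξ = Σ_{i=1}^{2} [ (B + (−1)^i √B·t) / (6π(B+1)√(2B + t² + 1 + 2(−1)^i √B·t)) + (1/(3π))·arctan( (B + (−1)^i √B·t) / √(2B + t² + 1 + 2(−1)^i √B·t) ) ] with B = NA/(4d²cos²θ) and t = tan θ. Then for every fixed t ∈ ℝ, lim_{B→∞} ξ(B,t) = 1/3. -/
import Mathlib


open Real Filter

/-- Exact total channel gain ξ(B, t) of equation (15), with the i = 1 term
(sign −) and the i = 2 term (sign +) written out explicitly. -/
noncomputable def xi (B t : ℝ) : ℝ :=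
  (B - Real.sqrt B * t) /
      (6 * π * (B + 1) * Real.sqrt (2 * B + t ^ 2 + 1 - 2 * Real.sqrt B * t)) +
    (1 / (3 * π)) * Real.arctan ((B - Real.sqrt B * t) /
      Real.sqrt (2 * B + t ^ 2 + 1 - 2 * Real.sqrt B * t)) +
  ((B + Real.sqrt B * t) /
      (6 * π * (B + 1) * Real.sqrt (2 * B + t ^ 2 + 1 + 2 * Real.sqrt B * t)) +
    (1 / (3 * π)) * Real.arctan ((B + Real.sqrt B * t) /
      Real.sqrt (2 * B + t ^ 2 + 1 + 2 * Real.sqrt B * t)))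

lemma sqrt_tendsto_atTop : Tendsto Real.sqrt atTop atTop := by
  apply tendsto_atTop_atTop_of_monotone (fun a b h => Real.sqrt_le_sqrt h)
  intro b
  exact ⟨(max b 0) ^ 2, by rw [Real.sqrt_sq (le_max_right b 0)]; exact le_max_left b 0⟩

lemma ratio_atTop (t : ℝ) :
    Tendsto (fun B => (B - Real.sqrt B * t) /
      Real.sqrt (2 * B + t ^ 2 + 1 - 2 * Real.sqrt B * t)) atTop atTop := by
  apply tendsto_atTop_mono' atTop
    (f₁ := fun B => (Real.sqrt B - |t|) / 4)
  · filter_upwards [eventually_ge_atTop ((|t| + 1) ^ 2)] with B hB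
    have hB0 : (0:ℝ) ≤ B := le_trans (by positivity) hB
    set u := Real.sqrt B with hu
    have hu2 : u ^ 2 = B := Real.sq_sqrt hB0
    have hut : |t| + 1 ≤ u := by
      have := Real.sqrt_le_sqrt hB
      rwa [Real.sqrt_sq (by positivity)] at this
    have ht : t ≤ |t| := le_abs_self t
    have ht' : -|t| ≤ t := neg_abs_le t
    have hu1 : (1:ℝ) ≤ u := by nlinarith [abs_nonneg t]
    have hinner : 2 * B + t ^ 2 + 1 - 2 * u * t = u ^ 2 + (u - t) ^ 2 + 1 := by
      rw [← hu2]; ring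
    have hD2 : (Real.sqrt (2 * B + t ^ 2 + 1 - 2 * u * t)) ^ 2
        = u ^ 2 + (u - t) ^ 2 + 1 := by
      rw [Real.sq_sqrt (by nlinarith), hinner]
    set D := Real.sqrt (2 * B + t ^ 2 + 1 - 2 * u * t) with hDdef
    have hDpos : 0 < D := Real.sqrt_pos.mpr (by nlinarith)
    have hDle : D ≤ 4 * u := by
      have h16 : 2 * B + t ^ 2 + 1 - 2 * u * t ≤ (4 * u) ^ 2 := by nlinarith
      calc D ≤ Real.sqrt ((4 * u) ^ 2) := Real.sqrt_le_sqrt h16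
        _ = 4 * u := Real.sqrt_sq (by positivity)
    rw [div_le_div_iff₀ (by norm_num) hDpos]
    nlinarith [hDpos.le]
  · have h1 : Tendsto (fun B : ℝ => Real.sqrt B - |t|) atTop atTop := by
      simpa [sub_eq_add_neg] using
        tendsto_atTop_add_const_right atTop (-|t|) sqrt_tendsto_atTop
    exact h1.atTop_div_const (by norm_num)

lemma frac_zero (t : ℝ) :
    Tendsto (fun B => (B - Real.sqrt B * t) /
      (6 * π * (B + 1) * Real.sqrt (2 * B + t ^ 2 + 1 - 2 * Real.sqrt B * t)))
      atTop (nhds 0) := by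
  have hsq : Tendsto (fun B : ℝ => (Real.sqrt B)⁻¹) atTop (nhds 0) :=
    sqrt_tendsto_atTop.inv_tendsto_atTop
  apply squeeze_zero' ?_ ?_ hsq
  · filter_upwards [eventually_ge_atTop ((|t| + 1) ^ 2)] with B hB
    have hB0 : (0:ℝ) ≤ B := le_trans (by positivity) hB
    have hu2 : (Real.sqrt B) ^ 2 = B := Real.sq_sqrt hB0
    have hut : |t| + 1 ≤ Real.sqrt B := by
      have := Real.sqrt_le_sqrt hB
      rwa [Real.sqrt_sq (by positivity)] at this
    have ht : t ≤ |t| := le_abs_self t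
    apply div_nonneg
    · nlinarith [abs_nonneg t]
    · have : (0:ℝ) < π := Real.pi_pos
      positivity
  · filter_upwards [eventually_ge_atTop ((|t| + 1) ^ 2)] with B hB
    have hB0 : (0:ℝ) ≤ B := le_trans (by positivity) hB
    set u := Real.sqrt B with hu
    have hu2 : u ^ 2 = B := Real.sq_sqrt hB0
    have hut : |t| + 1 ≤ u := by
      have := Real.sqrt_le_sqrt hB
      rwa [Real.sqrt_sq (by positivity)] at this
    have ht : t ≤ |t| := le_abs_self t
    have ht' : -|t| ≤ t := neg_abs_le t
    have hu1 : (1:ℝ) ≤ u := by nlinarith [abs_nonneg t]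
    have hD2 : (Real.sqrt (2 * B + t ^ 2 + 1 - 2 * u * t)) ^ 2
        = u ^ 2 + (u - t) ^ 2 + 1 := by
      rw [Real.sq_sqrt (by nlinarith)]
      rw [← hu2]; ring
    set D := Real.sqrt (2 * B + t ^ 2 + 1 - 2 * u * t) with hDdef
    have hDpos : 0 < D := Real.sqrt_pos.mpr (by nlinarith)
    have hDu : u ≤ D := by
      have : u ^ 2 ≤ D ^ 2 := by nlinarith
      nlinarith
    have hpi : (3:ℝ) < π := Real.pi_gt_three
    have hupos : (0:ℝ) < u := by linarith
    rw [div_le_iff₀ (by positivity)]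
    have key : (B - u * t) * u ≤ 6 * π * (B + 1) * D := by
      have hA : u ^ 2 * u ≤ (B + 1) * D := by
        nlinarith [mul_le_mul (show u ^ 2 ≤ B + 1 by nlinarith) hDu hupos.le
          (by positivity : (0:ℝ) ≤ B + 1)]
      nlinarith [mul_le_mul hpi.le hA (by positivity) Real.pi_pos.le]
    have hinv : u * u⁻¹ = 1 := mul_inv_cancel₀ hupos.ne'
    nlinarith [mul_nonneg (sub_nonneg.mpr key) (inv_nonneg.mpr hupos.le), hinv]

lemma term_tendsto (t : ℝ) :
    Tendsto (fun B => (B - Real.sqrt B * t) /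
      (6 * π * (B + 1) * Real.sqrt (2 * B + t ^ 2 + 1 - 2 * Real.sqrt B * t)) +
      (1 / (3 * π)) * Real.arctan ((B - Real.sqrt B * t) /
        Real.sqrt (2 * B + t ^ 2 + 1 - 2 * Real.sqrt B * t))) atTop (nhds (1 / 6)) := by
  have h1 := frac_zero t
  have h2 : Tendsto (fun B => (1 / (3 * π)) * Real.arctan ((B - Real.sqrt B * t) /
      Real.sqrt (2 * B + t ^ 2 + 1 - 2 * Real.sqrt B * t))) atTop
      (nhds ((1 / (3 * π)) * (π / 2))) := by
    exact Tendsto.const_mul _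
      ((Real.tendsto_arctan_atTop.mono_right nhdsWithin_le_nhds).comp (ratio_atTop t))
  have hpi : π ≠ 0 := Real.pi_ne_zero
  have h3 := h1.add h2
  have he : (0:ℝ) + (1 / (3 * π)) * (π / 2) = 1 / 6 := by field_simp; ring
  rwa [he] at h3

theorem xi_limit (t : ℝ) :
    Filter.Tendsto (fun B => xi B t) Filter.atTop (nhds (1 / 3)) := by
  have h := (term_tendsto t).add (term_tendsto (-t))
  have heq : ∀ B, xi B t =
      ((B - Real.sqrt B * t) /
        (6 * π * (B + 1) * Real.sqrt (2 * B + t ^ 2 + 1 - 2 * Real.sqrt B * t)) +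
      (1 / (3 * π)) * Real.arctan ((B - Real.sqrt B * t) /
        Real.sqrt (2 * B + t ^ 2 + 1 - 2 * Real.sqrt B * t))) +
      ((B - Real.sqrt B * (-t)) /
        (6 * π * (B + 1) * Real.sqrt (2 * B + (-t) ^ 2 + 1 - 2 * Real.sqrt B * (-t))) +
      (1 / (3 * π)) * Real.arctan ((B - Real.sqrt B * (-t)) /
        Real.sqrt (2 * B + (-t) ^ 2 + 1 - 2 * Real.sqrt B * (-t)))) := by
    intro B
    simp only [xi]
    ring_nf
  have h36 : (1:ℝ) / 6 + 1 / 6 = 1 / 3 := by norm_num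
  rw [show nhds ((1:ℝ)/3) = nhds (1/6 + 1/6) by norm_num]
  exact Tendsto.congr (fun B => (heq B).symm) h
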